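/- arXiv:1411.2243 — 3 statements merged into one kernel-verified Lean document; each statement's English description precedes it below -/
import Mathlib

section
/- For all real τ, ν, a with τ ≥ γ > 0 and a > 0, one has a² / √((τ² + ν²)·(((τ² − ν²) + a²)² + 4τ²ν²)) ≤ 3/τ. (In particular the bound const/τ holds with const = 3.) -/
set_option maxHeartbeats 1000000 in
/-- Scalar spectral estimate underlying Lemma 1: with `λ = τ + iν`, `τ ≥ γ > 0`, `a > 0`,
`a² / √((τ² + ν²)·(((τ² − ν²) + a²)² + 4τ²ν²)) ≤ 3/τ`. -/
theorem stmt0 (γ τ ν a : ℝ) (hγ : 0 < γ) (hτ : γ ≤ τ) (ha : 0 < a) :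
    a ^ 2 / Real.sqrt ((τ ^ 2 + ν ^ 2) * (((τ ^ 2 - ν ^ 2) + a ^ 2) ^ 2 + 4 * τ ^ 2 * ν ^ 2))
      ≤ 3 / τ := by
  have hτ0 : 0 < τ := lt_of_lt_of_le hγ hτ
  have hfac : (τ ^ 2 + ν ^ 2) * (((τ ^ 2 - ν ^ 2) + a ^ 2) ^ 2 + 4 * τ ^ 2 * ν ^ 2)
      = (τ ^ 2 + ν ^ 2) * ((τ ^ 2 + (ν - a) ^ 2) * (τ ^ 2 + (ν + a) ^ 2)) := by ring
  rw [hfac]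
  obtain ⟨D, hD⟩ : ∃ D, (τ ^ 2 + ν ^ 2) * ((τ ^ 2 + (ν - a) ^ 2) * (τ ^ 2 + (ν + a) ^ 2)) = D :=
    ⟨_, rfl⟩
  rw [hD]
  have key : (a ^ 2 * τ / 3) ^ 2 ≤ D := by
    rw [← hD]
    rcases le_total (a/2) |ν| with h | h
    · have h2 : a^2/4 ≤ ν^2 := by
        nlinarith [sq_abs ν, abs_nonneg ν]
      have b1 : a^2/4 ≤ τ^2 + ν^2 := by nlinarith [sq_nonneg τ]
      have b3 : τ^2 * (9*a^2/4) ≤ (τ^2 + (ν - a)^2) * (τ^2 + (ν + a)^2) := by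
        rcases le_total 0 ν with hv | hv
        · have hν : a/2 ≤ ν := by rwa [abs_of_nonneg hv] at h
          have e1 : τ^2 ≤ τ^2 + (ν - a)^2 := by nlinarith [sq_nonneg (ν - a)]
          have e2 : 9*a^2/4 ≤ τ^2 + (ν + a)^2 := by nlinarith [sq_nonneg τ]
          exact mul_le_mul e1 e2 (by positivity) (by positivity)
        · have hν : a/2 ≤ -ν := by rwa [abs_of_nonpos hv] at h
          have e1 : 9*a^2/4 ≤ τ^2 + (ν - a)^2 := by nlinarith [sq_nonneg τ]
          have e2 : τ^2 ≤ τ^2 + (ν + a)^2 := by nlinarith [sq_nonneg (ν + a)]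
          calc τ^2 * (9*a^2/4) = (9*a^2/4) * τ^2 := by ring
            _ ≤ (τ^2 + (ν - a)^2) * (τ^2 + (ν + a)^2) :=
              mul_le_mul e1 e2 (by positivity) (by positivity)
      calc (a ^ 2 * τ / 3) ^ 2 ≤ (a^2/4) * (τ^2 * (9*a^2/4)) := by nlinarith [sq_nonneg (a^2*τ)]
        _ ≤ (τ ^ 2 + ν ^ 2) * ((τ ^ 2 + (ν - a) ^ 2) * (τ ^ 2 + (ν + a) ^ 2)) :=
            mul_le_mul b1 b3 (by positivity) (by positivity)
    · have h2 : ν^2 ≤ a^2/4 := by nlinarith [sq_abs ν, abs_nonneg ν, ha.le]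
      have b1 : τ^2 ≤ τ^2 + ν^2 := by nlinarith [sq_nonneg ν]
      have b3 : 9*a^4/16 ≤ (τ^2 + (ν - a)^2) * (τ^2 + (ν + a)^2) := by
        have h3 : 3*a^2/4 ≤ a^2 - ν^2 := by linarith
        have h4 : (3*a^2/4)^2 ≤ (a^2 - ν^2)^2 := by nlinarith [sq_nonneg a]
        have expand : (τ^2 + (ν - a)^2) * (τ^2 + (ν + a)^2)
            = τ^4 + 2*τ^2*(ν^2 + a^2) + (a^2 - ν^2)^2 := by ring
        have p1 : (0:ℝ) ≤ τ^4 := by positivity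
        have p2 : (0:ℝ) ≤ 2*τ^2*(ν^2 + a^2) := by positivity
        rw [expand]; nlinarith [h4]
      calc (a ^ 2 * τ / 3) ^ 2 ≤ τ^2 * (9*a^4/16) := by nlinarith [sq_nonneg (a^2*τ)]
        _ ≤ (τ ^ 2 + ν ^ 2) * ((τ ^ 2 + (ν - a) ^ 2) * (τ ^ 2 + (ν + a) ^ 2)) :=
            mul_le_mul b1 b3 (by positivity) (by positivity)
  have hD0 : 0 < D := lt_of_lt_of_le (by positivity) key
  have hsq : a ^ 2 * τ / 3 ≤ Real.sqrt D := by
    have := Real.sqrt_le_sqrt key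
    rwa [Real.sqrt_sq (by positivity)] at this
  rw [div_le_div_iff₀ (Real.sqrt_pos.2 hD0) hτ0]
  nlinarith [hsq, hτ0, Real.sqrt_nonneg D]
end

section
/- For every complex λ = τ + iν with τ ≠ 0 and every real a, one has |λ / (λ² + a²)| ≤ 1/|τ|. Equivalently, √(τ² + ν²) / (√(τ² + (ν + a)²)·√(τ² + (ν − a)²)) ≤ 1/|τ|. -/
/-!
Write `λ / (λ² + c) = (λ + c/λ)⁻¹`. Since `Re (c/λ) = c · Re λ / |λ|²` has the sign of `Re λ`
when `c ≥ 0`, adding it can only move the real part away from zero, so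
`|Re λ| ≤ |Re (λ + c/λ)| ≤ ‖λ + c/λ‖`.
-/

namespace Complex

lemma abs_re_le_abs_re_add_ofReal_div (z : ℂ) {c : ℝ} (hc : 0 ≤ c) :
    |z.re| ≤ |(z + c / z).re| := by
  have hre : (z + c / z).re = z.re * (1 + c / normSq z) := by
    rw [add_re, div_eq_mul_inv, re_ofReal_mul, inv_re]
    ring
  have hq : 0 ≤ c / normSq z := div_nonneg hc (normSq_nonneg z)
  rw [hre, abs_mul, abs_of_nonneg (by linarith : 0 ≤ 1 + c / normSq z)]
  exact le_mul_of_one_le_right (abs_nonneg _) (le_add_of_nonneg_right hq)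

lemma norm_div_sq_add_ofReal_le (z : ℂ) (hz : z.re ≠ 0) {c : ℝ} (hc : 0 ≤ c) :
    ‖z / (z ^ 2 + c)‖ ≤ 1 / |z.re| := by
  have hz0 : z ≠ 0 := fun h => hz (by simp [h])
  have hinv : z / (z ^ 2 + c) = (z + c / z)⁻¹ := by
    rw [← inv_div, add_div, sq, mul_div_cancel_right₀ z hz0]
  rw [hinv, norm_inv, one_div]
  exact inv_anti₀ (abs_pos.mpr hz)
    ((abs_re_le_abs_re_add_ofReal_div z hc).trans (abs_re_le_norm _))

lemma norm_div_sq_add_sq_eq (z : ℂ) (a : ℝ) :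
    ‖z / (z ^ 2 + (a : ℂ) ^ 2)‖ =
      √(z.re ^ 2 + z.im ^ 2) / (√(z.re ^ 2 + (z.im + a) ^ 2) * √(z.re ^ 2 + (z.im - a) ^ 2)) := by
  have hfactor : z ^ 2 + (a : ℂ) ^ 2 = (z + a * I) * (z - a * I) := by
    ring_nf
    rw [I_sq]
    ring
  rw [norm_div, hfactor, norm_mul, norm_eq_sqrt_sq_add_sq, norm_eq_sqrt_sq_add_sq,
    norm_eq_sqrt_sq_add_sq]
  simp

end Complex

/-- Scalar version of Lemma 3: `|λ/(λ² + a²)| ≤ 1/|Re λ|`, equivalently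
`√(τ² + ν²) / (√(τ² + (ν + a)²)·√(τ² + (ν − a)²)) ≤ 1/|τ|`. -/
theorem stmt2 (lam : ℂ) (hτ : lam.re ≠ 0) (a : ℝ) :
    ‖lam / (lam ^ 2 + (a : ℂ) ^ 2)‖ ≤ 1 / |lam.re| ∧
    Real.sqrt (lam.re ^ 2 + lam.im ^ 2) /
        (Real.sqrt (lam.re ^ 2 + (lam.im + a) ^ 2) * Real.sqrt (lam.re ^ 2 + (lam.im - a) ^ 2))
      ≤ 1 / |lam.re| := by
  have hnorm : ‖lam / (lam ^ 2 + (a : ℂ) ^ 2)‖ ≤ 1 / |lam.re| := by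
    simpa using Complex.norm_div_sq_add_ofReal_le lam hτ (sq_nonneg a)
  exact ⟨hnorm, Complex.norm_div_sq_add_sq_eq lam a ▸ hnorm⟩
end

section
/- Let A₀ be a self-adjoint operator on H with A₀ ≥ κ₀ > 0, let cⱼ ≥ 0 with C := Σⱼ cⱼ < ∞ and γⱼ > 0. For φ₀ ∈ Dom(A₀²), φ₁ ∈ Dom(A₀) and t ≥ 0, the series Σⱼ cⱼ A₀²(A₀² + γⱼ²I)⁻¹[ −A₀( A₀(e^{−γⱼ t}I − cos(A₀t)) + γⱼ sin(A₀t) )φ₀ + ( γⱼ(cos(A₀t) − e^{−γⱼ t}I) + A₀ sin(A₀t) )φ₁ ] converges absolutely in H and its norm is bounded by a constant (depending only on C) times (‖A₀²φ₀‖ + ‖A₀φ₁‖). -/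
/-- `cos(tA)` for an operator `A`, via `cos θ = (e^{iθ} + e^{-iθ})/2`. -/
noncomputable def opCos {H : Type*} [NormedAddCommGroup H] [InnerProductSpace ℂ H]
    [CompleteSpace H] (A : H →L[ℂ] H) (t : ℝ) : H →L[ℂ] H :=
  (2 : ℂ)⁻¹ • (NormedSpace.exp ((t : ℂ) • Complex.I • A) +
    NormedSpace.exp (-((t : ℂ) • Complex.I • A)))

/-- `sin(tA)` for an operator `A`, via `sin θ = (e^{iθ} − e^{-iθ})/(2i)`. -/
noncomputable def opSin {H : Type*} [NormedAddCommGroup H] [InnerProductSpace ℂ H]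
    [CompleteSpace H] (A : H →L[ℂ] H) (t : ℝ) : H →L[ℂ] H :=
  (2 * Complex.I)⁻¹ • (NormedSpace.exp ((t : ℂ) • Complex.I • A) -
    NormedSpace.exp (-((t : ℂ) • Complex.I • A)))


/-! The j-th term is `(-A²R D - γ A R S)(A²φ₀) + (γ A R D' + A²R S)(Aφ₁)` with
`D = e^{-γt} - cos(tA) = -D'` and `S = sin(tA)`, because `R = (A² + γ²)⁻¹` and the functions of
`A` commute with `A`. Here `‖D‖, ‖D'‖ ≤ 2` and `‖S‖ ≤ 1` since `exp(± itA)` is unitary, while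
`‖A²R‖ ≤ 1` and `‖γ A R‖ ≤ 1/2` follow from
`‖(A² + γ²) y‖² = ‖A² y‖² + 2γ²‖A y‖² + γ⁴‖y‖²` and `‖A y‖² = ⟪A² y, y⟫ ≤ ‖A² y‖ ‖y‖`.
So the j-th term is at most `3 cⱼ (‖A²φ₀‖ + ‖Aφ₁‖)`, and summing gives `d = 3C + 1`. -/

open Complex

section CommutingProducts

variable {𝕜 α : Type*} [CommSemiring 𝕜] [Ring α] [Algebra 𝕜 α] {a r d s : α}

lemma sq_mul_mul_neg_mul_mul_add_smul (γ : 𝕜) (hr : Commute a r) (hd : Commute a d)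
    (hs : Commute a s) :
    a ^ 2 * r * -(a * (a * d + γ • s)) = (-(a ^ 2 * r * d) - γ • (a * r) * s) * a ^ 2 := by
  simp only [pow_two, mul_add, sub_mul, mul_neg, neg_mul, mul_smul_comm, smul_mul_assoc,
    mul_assoc, hr.symm.left_comm, hd.symm.left_comm, hd.symm.eq, hs.symm.left_comm, hs.symm.eq]
  abel

lemma sq_mul_mul_smul_add_mul (γ : 𝕜) (hr : Commute a r) (hd : Commute a d) (hs : Commute a s) :
    a ^ 2 * r * (γ • d + a * s) = (γ • (a * r) * d + a ^ 2 * r * s) * a := by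
  simp only [pow_two, mul_add, add_mul, mul_smul_comm, smul_mul_assoc, mul_assoc,
    hr.symm.left_comm, hd.symm.eq, hs.symm.eq]

end CommutingProducts

section Operators

variable {H : Type*} [NormedAddCommGroup H] [InnerProductSpace ℂ H]

lemma norm_smul_one_sub_le_two {e : ℝ} (he : |e| ≤ 1) {E : H →L[ℂ] H} (hE : ‖E‖ ≤ 1) :
    ‖e • (1 : H →L[ℂ] H) - E‖ ≤ 2 := by
  have h₁ : ‖e • (1 : H →L[ℂ] H)‖ ≤ 1 := by
    rw [norm_smul, Real.norm_eq_abs]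
    exact mul_le_one₀ he (norm_nonneg _) ContinuousLinearMap.norm_id_le
  linarith [norm_sub_le_of_le h₁ hE]

variable [CompleteSpace H] {A : H →L[ℂ] H}

lemma norm_le_one_of_mem_unitary {u : H →L[ℂ] H} (hu : u ∈ unitary (H →L[ℂ] H)) : ‖u‖ ≤ 1 :=
  u.opNorm_le_bound zero_le_one fun x => by
    rw [ContinuousLinearMap.norm_map_of_mem_unitary hu, one_mul]

lemma IsSelfAdjoint.norm_exp_smul_I_smul_le_one (hA : IsSelfAdjoint A) (t : ℝ) :
    ‖NormedSpace.exp ((t : ℂ) • I • A)‖ ≤ 1 := by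
  have h : (t : ℂ) • I • A = I • (t • A) := by rw [smul_comm, Complex.coe_smul]
  have hu := (selfAdjoint.expUnitary ⟨t • A, (IsSelfAdjoint.all t).smul hA⟩).prop
  rw [selfAdjoint.expUnitary_coe] at hu
  exact h ▸ norm_le_one_of_mem_unitary hu

lemma IsSelfAdjoint.norm_exp_neg_smul_I_smul_le_one (hA : IsSelfAdjoint A) (t : ℝ) :
    ‖NormedSpace.exp (-((t : ℂ) • I • A))‖ ≤ 1 := by
  rw [← neg_smul, ← ofReal_neg]
  exact hA.norm_exp_smul_I_smul_le_one (-t)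

lemma IsSelfAdjoint.norm_opCos_le_one (hA : IsSelfAdjoint A) (t : ℝ) : ‖opCos A t‖ ≤ 1 := by
  have h := norm_add_le_of_le (hA.norm_exp_smul_I_smul_le_one t)
    (hA.norm_exp_neg_smul_I_smul_le_one t)
  rw [opCos, norm_smul, norm_inv, norm_ofNat]
  linarith

lemma IsSelfAdjoint.norm_opSin_le_one (hA : IsSelfAdjoint A) (t : ℝ) : ‖opSin A t‖ ≤ 1 := by
  have h := norm_sub_le_of_le (hA.norm_exp_smul_I_smul_le_one t)
    (hA.norm_exp_neg_smul_I_smul_le_one t)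
  rw [opSin, norm_smul, norm_inv, norm_mul, norm_I, mul_one, norm_ofNat]
  linarith

lemma commute_opCos (A : H →L[ℂ] H) (t : ℝ) : Commute A (opCos A t) :=
  have h : Commute A ((t : ℂ) • I • A) := ((Commute.refl A).smul_right I).smul_right _
  (h.exp_right.add_right h.neg_right.exp_right).smul_right _

lemma commute_opSin (A : H →L[ℂ] H) (t : ℝ) : Commute A (opSin A t) :=
  have h : Commute A ((t : ℂ) • I • A) := ((Commute.refl A).smul_right I).smul_right _
  (h.exp_right.sub_right h.neg_right.exp_right).smul_right _

namespace IsSelfAdjoint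

lemma re_inner_sq_apply_self (hA : IsSelfAdjoint A) (y : H) :
    RCLike.re (inner ℂ ((A ^ 2) y) y) = ‖A y‖ ^ 2 := by
  have h : inner ℂ (A (A y)) y = inner ℂ (A y) (A y) := hA.isSymmetric (A y) y
  rw [pow_two, mul_apply_eq_comp, h, inner_self_eq_norm_sq]

lemma norm_apply_sq_le (hA : IsSelfAdjoint A) (y : H) : ‖A y‖ ^ 2 ≤ ‖(A ^ 2) y‖ * ‖y‖ :=
  hA.re_inner_sq_apply_self y ▸ re_inner_le_norm _ _

lemma norm_sq_add_smul_apply_sq (hA : IsSelfAdjoint A) (γ : ℝ) (y : H) :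
    ‖(A ^ 2 + γ ^ 2 • (1 : H →L[ℂ] H)) y‖ ^ 2 =
      ‖(A ^ 2) y‖ ^ 2 + 2 * γ ^ 2 * ‖A y‖ ^ 2 + (γ ^ 2 * ‖y‖) ^ 2 := by
  rw [add_apply, smul_apply, one_apply_eq_self, norm_add_sq (𝕜 := ℂ),
    RCLike.real_smul_eq_coe_smul (K := ℂ), inner_smul_right, RCLike.re_ofReal_mul,
    hA.re_inner_sq_apply_self, norm_smul, RCLike.norm_ofReal, abs_sq]
  ring

lemma norm_sq_apply_le (hA : IsSelfAdjoint A) (γ : ℝ) (y : H) :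
    ‖(A ^ 2) y‖ ≤ ‖(A ^ 2 + γ ^ 2 • (1 : H →L[ℂ] H)) y‖ := by
  refine abs_le_of_sq_le_sq' ?_ (norm_nonneg _) |>.2
  rw [hA.norm_sq_add_smul_apply_sq]
  nlinarith [sq_nonneg (γ * ‖A y‖), sq_nonneg (γ ^ 2 * ‖y‖)]

lemma two_mul_abs_mul_norm_apply_le (hA : IsSelfAdjoint A) (γ : ℝ) (y : H) :
    2 * |γ| * ‖A y‖ ≤ ‖(A ^ 2 + γ ^ 2 • (1 : H →L[ℂ] H)) y‖ := by
  refine abs_le_of_sq_le_sq' ?_ (norm_nonneg _) |>.2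
  rw [hA.norm_sq_add_smul_apply_sq, mul_pow, mul_pow, sq_abs]
  -- `2γ²‖A y‖² ≤ 2γ²‖A² y‖‖y‖ ≤ ‖A² y‖² + γ⁴‖y‖²` by AM-GM
  nlinarith [hA.norm_apply_sq_le y, sq_nonneg (‖(A ^ 2) y‖ - γ ^ 2 * ‖y‖), sq_nonneg γ]

variable {γ : ℝ} {R : H →L[ℂ] H}

lemma norm_sq_mul_le_one (hA : IsSelfAdjoint A)
    (hR : (A ^ 2 + γ ^ 2 • (1 : H →L[ℂ] H)) * R = 1) : ‖A ^ 2 * R‖ ≤ 1 :=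
  ContinuousLinearMap.opNorm_le_bound _ zero_le_one fun x => by
    have h := hA.norm_sq_apply_le γ (R x)
    rwa [← mul_apply_eq_comp (A ^ 2 + _) R, hR, one_apply_eq_self, ← mul_apply_eq_comp,
      ← one_mul ‖x‖] at h

lemma norm_smul_mul_le_half (hA : IsSelfAdjoint A)
    (hR : (A ^ 2 + γ ^ 2 • (1 : H →L[ℂ] H)) * R = 1) : ‖γ • (A * R)‖ ≤ 1 / 2 :=
  ContinuousLinearMap.opNorm_le_bound _ (by norm_num) fun x => by
    have h := hA.two_mul_abs_mul_norm_apply_le γ (R x)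
    rw [← mul_apply_eq_comp (A ^ 2 + _) R, hR, one_apply_eq_self] at h
    rw [smul_apply, norm_smul, Real.norm_eq_abs, mul_apply_eq_comp]
    linarith

lemma norm_sq_mul_apply_combination_le (hA : IsSelfAdjoint A)
    (hR : (A ^ 2 + γ ^ 2 • (1 : H →L[ℂ] H)) * R = 1) (hAR : Commute A R) {D D' S : H →L[ℂ] H}
    (hD : Commute A D) (hD' : Commute A D') (hS : Commute A S) (hDn : ‖D‖ ≤ 2) (hD'n : ‖D'‖ ≤ 2)
    (hSn : ‖S‖ ≤ 1) (φ₀ φ₁ : H) :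
    ‖(A ^ 2 * R) ((-(A * (A * D + γ • S))) φ₀ + (γ • D' + A * S) φ₁)‖ ≤
      3 * (‖(A ^ 2) φ₀‖ + ‖A φ₁‖) := by
  have hP := hA.norm_sq_mul_le_one hR
  have hQ := hA.norm_smul_mul_le_half hR
  have hT₀ : ‖-(A ^ 2 * R * D) - γ • (A * R) * S‖ ≤ 3 := by
    calc _ ≤ ‖A ^ 2 * R‖ * ‖D‖ + ‖γ • (A * R)‖ * ‖S‖ :=
          norm_sub_le_of_le ((norm_neg _).trans_le (ContinuousLinearMap.opNorm_comp_le _ _))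
            (ContinuousLinearMap.opNorm_comp_le _ _)
      _ ≤ 1 * 2 + 1 / 2 * 1 := by gcongr
      _ ≤ 3 := by norm_num
  have hT₁ : ‖γ • (A * R) * D' + A ^ 2 * R * S‖ ≤ 3 := by
    calc _ ≤ ‖γ • (A * R)‖ * ‖D'‖ + ‖A ^ 2 * R‖ * ‖S‖ :=
          norm_add_le_of_le (ContinuousLinearMap.opNorm_comp_le _ _)
            (ContinuousLinearMap.opNorm_comp_le _ _)
      _ ≤ 1 / 2 * 2 + 1 * 1 := by gcongr
      _ ≤ 3 := by norm_num
  rw [map_add, ← mul_apply_eq_comp, ← mul_apply_eq_comp,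
    sq_mul_mul_neg_mul_mul_add_smul γ hAR hD hS, sq_mul_mul_smul_add_mul γ hAR hD' hS,
    mul_apply_eq_comp, mul_apply_eq_comp]
  calc _ ≤ 3 * ‖(A ^ 2) φ₀‖ + 3 * ‖A φ₁‖ :=
        norm_add_le_of_le ((ContinuousLinearMap.le_opNorm _ _).trans (by gcongr))
          ((ContinuousLinearMap.le_opNorm _ _).trans (by gcongr))
    _ = _ := by ring

end IsSelfAdjoint

end Operators

lemma summable_norm_and_norm_tsum_le {E : Type*} [SeminormedAddCommGroup E] {f : ℕ → E}
    {c : ℕ → ℝ} {C M d : ℝ} (hc : HasSum c C) (hf : ∀ j, ‖f j‖ ≤ c j * M) (hd : C * M ≤ d) :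
    (Summable fun j => ‖f j‖) ∧ ‖∑' j, f j‖ ≤ d :=
  ⟨.of_nonneg_of_le (fun _ => norm_nonneg _) hf (hc.mul_right M).summable,
    (tsum_of_norm_bounded (hc.mul_right M) hf).trans hd⟩

theorem stmt14_general {H : Type*} [NormedAddCommGroup H] [InnerProductSpace ℂ H] [CompleteSpace H]
    (A₀ : H →L[ℂ] H) (hsa : IsSelfAdjoint A₀)
    (c γs : ℕ → ℝ) (hc : ∀ j, 0 ≤ c j) (hsum : Summable c) (C : ℝ) (hC : C = ∑' j, c j)
    (hγs : ∀ j, 0 < γs j)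
    (R : ℕ → (H →L[ℂ] H))
    (hR₁ : ∀ j, (A₀ ^ 2 + γs j ^ 2 • (1 : H →L[ℂ] H)) * R j = 1)
    (hR₂ : ∀ j, R j * (A₀ ^ 2 + γs j ^ 2 • (1 : H →L[ℂ] H)) = 1) :
    ∃ d : ℝ, 0 < d ∧ ∀ t : ℝ, 0 ≤ t → ∀ φ₀ φ₁ : H,
      (Summable fun j =>
        ‖c j • ((A₀ ^ 2 * R j)
          ((-(A₀ * (A₀ * (Real.exp (-(γs j) * t) • (1 : H →L[ℂ] H) - opCos A₀ t)
              + γs j • opSin A₀ t))) φ₀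
           + (γs j • (opCos A₀ t - Real.exp (-(γs j) * t) • (1 : H →L[ℂ] H))
              + A₀ * opSin A₀ t) φ₁))‖) ∧
      ‖∑' j, c j • ((A₀ ^ 2 * R j)
          ((-(A₀ * (A₀ * (Real.exp (-(γs j) * t) • (1 : H →L[ℂ] H) - opCos A₀ t)
              + γs j • opSin A₀ t))) φ₀
           + (γs j • (opCos A₀ t - Real.exp (-(γs j) * t) • (1 : H →L[ℂ] H))
              + A₀ * opSin A₀ t) φ₁))‖
        ≤ d * (‖(A₀ ^ 2) φ₀‖ + ‖A₀ φ₁‖) := by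
  have hC₀ : 0 ≤ C := hC ▸ tsum_nonneg hc
  refine ⟨3 * C + 1, by positivity, fun t ht φ₀ φ₁ => ?_⟩
  refine summable_norm_and_norm_tsum_le (hC ▸ hsum.hasSum) (M := 3 * (‖(A₀ ^ 2) φ₀‖ + ‖A₀ φ₁‖))
    (fun j => ?_) (by nlinarith [norm_nonneg ((A₀ ^ 2) φ₀), norm_nonneg (A₀ φ₁)])
  have he : |Real.exp (-(γs j) * t)| ≤ 1 := by
    rw [abs_of_pos (Real.exp_pos _), Real.exp_le_one_iff, neg_mul, neg_nonpos]
    exact mul_nonneg (hγs j).le ht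
  have hcos := hsa.norm_opCos_le_one t
  have hAR : Commute A₀ (R j) :=
    ((Commute.refl A₀).pow_right 2 |>.add_right ((Commute.one_right A₀).smul_right _))
      |>.units_inv_right (u := ⟨_, R j, hR₁ j, hR₂ j⟩)
  rw [norm_smul, Real.norm_of_nonneg (hc j)]
  refine mul_le_mul_of_nonneg_left ?_ (hc j)
  exact hsa.norm_sq_mul_apply_combination_le (hR₁ j) hAR
    (((Commute.one_right A₀).smul_right _).sub_right (commute_opCos A₀ t))
    ((commute_opCos A₀ t).sub_right ((Commute.one_right A₀).smul_right _))
    (commute_opSin A₀ t) (norm_smul_one_sub_le_two he hcos)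
    (norm_sub_rev (E := H →L[ℂ] H) _ _ ▸ norm_smul_one_sub_le_two he hcos)
    (hsa.norm_opSin_le_one t) φ₀ φ₁

/-- Estimate (eq:mest): the series
`Σⱼ cⱼ A₀²(A₀² + γⱼ²I)⁻¹[ −A₀(A₀(e^{−γⱼt}I − cos(A₀t)) + γⱼ sin(A₀t))φ₀
  + (γⱼ(cos(A₀t) − e^{−γⱼt}I) + A₀ sin(A₀t))φ₁ ]`
converges absolutely, with norm bounded by a constant (depending only on `C = Σ cⱼ`) times
`‖A₀²φ₀‖ + ‖A₀φ₁‖`, uniformly in `t ≥ 0`. -/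
theorem stmt14 {H : Type*} [NormedAddCommGroup H] [InnerProductSpace ℂ H] [CompleteSpace H]
    (A₀ : H →L[ℂ] H) (hsa : IsSelfAdjoint A₀) (κ₀ : ℝ) (hκ₀ : 0 < κ₀)
    (hAbd : ∀ x : H, κ₀ * ‖x‖ ≤ ‖A₀ x‖)
    (c γs : ℕ → ℝ) (hc : ∀ j, 0 ≤ c j) (hsum : Summable c) (C : ℝ) (hC : C = ∑' j, c j)
    (hγs : ∀ j, 0 < γs j)
    (R : ℕ → (H →L[ℂ] H))
    (hR₁ : ∀ j, (A₀ ^ 2 + γs j ^ 2 • (1 : H →L[ℂ] H)) * R j = 1)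
    (hR₂ : ∀ j, R j * (A₀ ^ 2 + γs j ^ 2 • (1 : H →L[ℂ] H)) = 1) :
    ∃ d : ℝ, 0 < d ∧ ∀ t : ℝ, 0 ≤ t → ∀ φ₀ φ₁ : H,
      (Summable fun j =>
        ‖c j • ((A₀ ^ 2 * R j)
          ((-(A₀ * (A₀ * (Real.exp (-(γs j) * t) • (1 : H →L[ℂ] H) - opCos A₀ t)
              + γs j • opSin A₀ t))) φ₀
           + (γs j • (opCos A₀ t - Real.exp (-(γs j) * t) • (1 : H →L[ℂ] H))
              + A₀ * opSin A₀ t) φ₁))‖) ∧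
      ‖∑' j, c j • ((A₀ ^ 2 * R j)
          ((-(A₀ * (A₀ * (Real.exp (-(γs j) * t) • (1 : H →L[ℂ] H) - opCos A₀ t)
              + γs j • opSin A₀ t))) φ₀
           + (γs j • (opCos A₀ t - Real.exp (-(γs j) * t) • (1 : H →L[ℂ] H))
              + A₀ * opSin A₀ t) φ₁))‖
        ≤ d * (‖(A₀ ^ 2) φ₀‖ + ‖A₀ φ₁‖) :=
  stmt14_general A₀ hsa c γs hc hsum C hC hγs R hR₁ hR₂
end
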